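/- Let B(x) = (b_{ik}(x)) be continuous and cooperative on the closure of Ω with B(x̃) irreducible for some x̃, and let η = max_x s(B(x)). For ε > 0 define Ω_ε = {x : s(B(x)) ≥ η − ε}, B̲^ε(x) = B(x) + (η − 2ε − s(B(x)))I for x ∈ Ω_ε and B(x) − εI otherwise. Then B̲^ε is continuous and cooperative, B̲^ε(x̃) is irreducible, B̲^ε(x) ≤ B(x) entrywise for all x, and s(B̲^ε(x)) = η − 2ε for x ∈ Ω_ε while s(B̲^ε(x)) < η − 2ε for x ∉ Ω_ε; in particular max_x [max_x s(B̲^ε(x)) − s(B̲^ε(x))]⁻¹ fails to be integrable on the nonempty open interior of Ω_ε (since s(B̲^ε) is constant there). -/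

import Mathlib

open MeasureTheory Set

/-- The spectral bound of a real square matrix: the supremum of the real parts of its
(complex) eigenvalues. -/
noncomputable def specBound {n : ℕ} (M : Matrix (Fin n) (Fin n) ℝ) : ℝ :=
  sSup (Complex.re '' spectrum ℂ (M.map (Complex.ofReal)))

/-- A square matrix is irreducible if the index set cannot be split into two disjoint
nonempty sets `I`, `Iᶜ` with `M i k = 0` for `i ∈ I`, `k ∈ Iᶜ`. -/
def MatIrreducible {n : ℕ} (M : Matrix (Fin n) (Fin n) ℝ) : Prop :=
  ∀ I : Set (Fin n), I.Nonempty → Iᶜ.Nonempty → ∃ i ∈ I, ∃ k ∈ Iᶜ, M i k ≠ 0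

open Polynomial Matrix
open scoped Pointwise NNReal

namespace SpecAux

variable {m : ℕ}

lemma eval_charpoly (A : Matrix (Fin m) (Fin m) ℂ) (z : ℂ) :
    A.charpoly.eval z = (z • (1 : Matrix (Fin m) (Fin m) ℂ) - A).det := by
  rw [Matrix.charpoly, _root_.eval_det, matPolyEquiv_charmatrix]
  congr 1
  rw [eval_sub, eval_X, eval_C]
  congr 1
  simp [Matrix.scalar, smul_one_eq_diagonal]

lemma mem_spectrum_iff_eval (A : Matrix (Fin m) (Fin m) ℂ) (z : ℂ) :
    z ∈ spectrum ℂ A ↔ A.charpoly.eval z = 0 := by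
  rw [spectrum.mem_iff, eval_charpoly, Algebra.algebraMap_eq_smul_one,
    Matrix.isUnit_iff_isUnit_det, isUnit_iff_ne_zero, not_not]

end SpecAux

namespace SpecAux

lemma continuous_det_shift (z : ℂ) :
    Continuous fun A : Matrix (Fin m) (Fin m) ℂ => (z • (1 : Matrix (Fin m) (Fin m) ℂ) - A).det :=
  (continuous_const.sub continuous_id).matrix_det

lemma continuous_charpoly_coeff (j : ℕ) :
    Continuous fun A : Matrix (Fin m) (Fin m) ℂ => A.charpoly.coeff j := by
  classical
  set v : Fin (m + 1) → ℂ := fun i => (i : ℕ) with hv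
  have hinj : Set.InjOn v (Finset.univ : Finset (Fin (m+1))) := by
    intro a _ b _ hab
    have : ((a : ℕ) : ℂ) = ((b : ℕ) : ℂ) := hab
    exact Fin.ext (Nat.cast_injective this)
  have hdeg : ∀ A : Matrix (Fin m) (Fin m) ℂ,
      A.charpoly.degree < (Finset.univ : Finset (Fin (m+1))).card := by
    intro A
    refine lt_of_le_of_lt degree_le_natDegree ?_
    rw [Matrix.charpoly_natDegree_eq_dim]
    simp [Fintype.card_fin]
    exact_mod_cast Nat.lt_succ_self m
  have key : ∀ A : Matrix (Fin m) (Fin m) ℂ,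
      A.charpoly = Lagrange.interpolate Finset.univ v (fun i => A.charpoly.eval (v i)) := by
    intro A
    exact Lagrange.eq_interpolate hinj (hdeg A)
  set L : (Fin (m+1) → ℂ) →ₗ[ℂ] ℂ :=
    (Polynomial.lcoeff ℂ j).comp (Lagrange.interpolate Finset.univ v) with hL
  have heq : (fun A : Matrix (Fin m) (Fin m) ℂ => A.charpoly.coeff j)
      = fun A => L (fun i => (v i • (1 : Matrix (Fin m) (Fin m) ℂ) - A).det) := by
    funext A
    have : (fun i => (v i • (1 : Matrix (Fin m) (Fin m) ℂ) - A).det)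
        = fun i => A.charpoly.eval (v i) := by
      funext i; rw [eval_charpoly]
    rw [this, hL, LinearMap.comp_apply, ← key A]
    rfl
  rw [heq]
  exact L.continuous_of_finiteDimensional.comp
    (continuous_pi fun i => continuous_det_shift (v i))

end SpecAux

namespace SpecAux

lemma exists_root_vector (A : Matrix (Fin m) (Fin m) ℂ) :
    ∃ r : Fin m → ℂ, A.charpoly = ∏ i, (X - C (r i)) := by
  classical
  have hmonic : A.charpoly.Monic := Matrix.charpoly_monic A
  have hsplit : A.charpoly.Splits := IsAlgClosed.splits _
  have hcard : A.charpoly.roots.card = m := by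
    rw [(Polynomial.splits_iff_card_roots).mp hsplit, Matrix.charpoly_natDegree_eq_dim,
      Fintype.card_fin]
  set l : List ℂ := A.charpoly.roots.toList with hl
  have hlen : l.length = m := by
    rw [hl, Multiset.length_toList, hcard]
  refine ⟨fun i => l.get (Fin.cast hlen.symm i), ?_⟩
  have hofn : List.ofFn (fun i : Fin m => l.get (Fin.cast hlen.symm i)) = l := by
    apply List.ext_getElem
    · simp [hlen]
    · intro i h1 h2
      simp [List.getElem_ofFn]
  have hprod := hsplit.eq_prod_roots_of_monic hmonic
  rw [hprod]
  have : A.charpoly.roots = (l : Multiset ℂ) := by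
    rw [hl, Multiset.coe_toList]
  rw [this, Multiset.map_coe, Multiset.prod_coe,
    ← List.prod_ofFn (f := fun i : Fin m => X - C (l.get (Fin.cast hlen.symm i)))]
  congr 1
  conv_lhs => rw [← hofn]
  rw [List.map_ofFn]
  rfl

end SpecAux

namespace SpecAux

lemma spectrum_eq_range {A : Matrix (Fin m) (Fin m) ℂ} {r : Fin m → ℂ}
    (h : A.charpoly = ∏ i, (X - C (r i))) : spectrum ℂ A = Set.range r := by
  ext z
  rw [mem_spectrum_iff_eval, h, Polynomial.eval_prod]
  simp only [eval_sub, eval_X, eval_C, Finset.prod_eq_zero_iff, Finset.mem_univ, true_and,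
    sub_eq_zero]
  constructor
  · rintro ⟨i, hi⟩; exact ⟨i, hi.symm⟩
  · rintro ⟨i, hi⟩; exact ⟨i, hi.symm⟩

lemma isGreatest_specBound (hne : (Finset.univ : Finset (Fin m)).Nonempty)
    {M : Matrix (Fin m) (Fin m) ℝ} {r : Fin m → ℂ}
    (h : (M.map Complex.ofReal).charpoly = ∏ i, (X - C (r i))) :
    specBound M = Finset.univ.sup' hne (fun i => (r i).re) ∧
    IsGreatest (Complex.re '' spectrum ℂ (M.map Complex.ofReal))
      (Finset.univ.sup' hne (fun i => (r i).re)) := by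
  have himg : Complex.re '' spectrum ℂ (M.map Complex.ofReal)
      = Set.range (fun i => (r i).re) := by
    rw [spectrum_eq_range h, ← Set.range_comp]
    rfl
  have hgr : IsGreatest (Complex.re '' spectrum ℂ (M.map Complex.ofReal))
      (Finset.univ.sup' hne fun i => (r i).re) := by
    rw [himg]
    constructor
    · obtain ⟨i, -, hi⟩ := Finset.exists_mem_eq_sup' hne (fun i => (r i).re)
      exact ⟨i, hi.symm⟩
    · rintro _ ⟨i, rfl⟩
      exact Finset.le_sup' (fun i => (r i).re) (Finset.mem_univ i)
  exact ⟨hgr.csSup_eq, hgr⟩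

end SpecAux

namespace SpecAux

lemma map_add_smul_one (M : Matrix (Fin m) (Fin m) ℝ) (c : ℝ) :
    (M + c • (1 : Matrix (Fin m) (Fin m) ℝ)).map Complex.ofReal
      = M.map Complex.ofReal + algebraMap ℂ (Matrix (Fin m) (Fin m) ℂ) (c : ℂ) := by
  rw [Algebra.algebraMap_eq_smul_one]
  ext i k
  by_cases hik : i = k <;>
    simp [Matrix.map_apply, Matrix.add_apply, Matrix.smul_apply, Matrix.one_apply, hik]

lemma specBound_add_smul (hm : 0 < m) (M : Matrix (Fin m) (Fin m) ℝ) (c : ℝ) :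
    specBound (M + c • (1 : Matrix (Fin m) (Fin m) ℝ)) = specBound M + c := by
  have : Nonempty (Fin m) := ⟨⟨0, hm⟩⟩
  have hne : (Finset.univ : Finset (Fin m)).Nonempty := Finset.univ_nonempty
  obtain ⟨r, hr⟩ := exists_root_vector (M.map Complex.ofReal)
  obtain ⟨hs, hgr⟩ := isGreatest_specBound hne hr
  have hσ : spectrum ℂ ((M + c • (1 : Matrix (Fin m) (Fin m) ℝ)).map Complex.ofReal)
      = spectrum ℂ (M.map Complex.ofReal) + ({(c : ℂ)} : Set ℂ) := by
    rw [map_add_smul_one, ← spectrum.add_singleton_eq]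
  have himg : Complex.re '' spectrum ℂ ((M + c • (1 : Matrix (Fin m) (Fin m) ℝ)).map Complex.ofReal)
      = (fun t => t + c) '' (Complex.re '' spectrum ℂ (M.map Complex.ofReal)) := by
    rw [hσ, Set.add_singleton, Set.image_image, Set.image_image]
    simp
  have hgr' : IsGreatest
      (Complex.re '' spectrum ℂ ((M + c • (1 : Matrix (Fin m) (Fin m) ℝ)).map Complex.ofReal))
      (specBound M + c) := by
    rw [himg]
    constructor
    · exact ⟨specBound M, by rw [hs]; exact hgr.1, rfl⟩
    · rintro _ ⟨y, hy, rfl⟩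
      have h2 := hgr.2 hy
      rw [← hs] at h2
      exact add_le_add_left h2 c
  exact hgr'.csSup_eq

lemma continuous_sup' (hne : (Finset.univ : Finset (Fin m)).Nonempty) :
    Continuous fun v : Fin m → ℝ => Finset.univ.sup' hne v := by
  classical
  have : ∀ (s : Finset (Fin m)) (hs : s.Nonempty),
      Continuous fun v : Fin m → ℝ => s.sup' hs v := by
    intro s hs
    induction hs using Finset.Nonempty.cons_induction with
    | singleton i => simpa only [Finset.sup'_singleton] using continuous_apply i
    | cons i s his hs ih =>
        have hh : ∀ v : Fin m → ℝ, (Finset.cons i s his).sup' (Finset.cons_nonempty his) v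
            = max (v i) (s.sup' hs v) := fun v => Finset.sup'_cons hs v
        simp only [hh]
        exact (continuous_apply i).max ih
  exact this _ hne

end SpecAux

namespace SpecAux

open Filter Topology

lemma key_subseq (hm : 0 < m) {T : ℕ → Matrix (Fin m) (Fin m) ℝ} {M₀ : Matrix (Fin m) (Fin m) ℝ}
    (hT : Tendsto T atTop (𝓝 M₀)) :
    ∃ φ : ℕ → ℕ, Tendsto (fun j => specBound (T (φ j))) atTop (𝓝 (specBound M₀)) := by
  classical
  have : Nonempty (Fin m) := ⟨⟨0, hm⟩⟩
  have hne : (Finset.univ : Finset (Fin m)).Nonempty := Finset.univ_nonempty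
  -- root vectors
  choose r hr using fun k => exists_root_vector ((T k).map Complex.ofReal)
  -- complex matrices converge
  have hTc : Tendsto (fun k => (T k).map Complex.ofReal) atTop (𝓝 (M₀.map Complex.ofReal)) :=
    ((continuous_id.matrix_map Complex.continuous_ofReal).tendsto _).comp hT
  -- coefficient convergence & bound
  have hcoeff : ∀ j : ℕ, Tendsto (fun k => ((T k).map Complex.ofReal).charpoly.coeff j) atTop
      (𝓝 ((M₀.map Complex.ofReal).charpoly.coeff j)) := fun j =>
    ((continuous_charpoly_coeff j).tendsto _).comp hTc
  set b : ℕ → ℝ := fun k => 1 + ∑ j ∈ Finset.range m, ‖((T k).map Complex.ofReal).charpoly.coeff j‖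
    with hb
  have hbt : Tendsto b atTop
      (𝓝 (1 + ∑ j ∈ Finset.range m, ‖(M₀.map Complex.ofReal).charpoly.coeff j‖)) := by
    apply Tendsto.const_add
    exact tendsto_finset_sum _ fun j _ => ((hcoeff j).norm)
  obtain ⟨Cb, hCb⟩ := hbt.bddAbove_range
  have hC0 : ∀ k, b k ≤ Cb := fun k => hCb ⟨k, rfl⟩
  -- roots bounded
  have hroot : ∀ k i, ‖r k i‖ ≤ b k := by
    intro k i
    have hmon : ((T k).map Complex.ofReal).charpoly.Monic := Matrix.charpoly_monic _
    have hisroot : ((T k).map Complex.ofReal).charpoly.IsRoot (r k i) := by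
      rw [hr k, Polynomial.IsRoot, Polynomial.eval_prod]
      exact Finset.prod_eq_zero (Finset.mem_univ i) (by simp)
    have hlt := hisroot.norm_lt_cauchyBound hmon.ne_zero
    have hcb : (Polynomial.cauchyBound (((T k).map Complex.ofReal).charpoly) : ℝ) ≤ b k := by
      rw [Polynomial.cauchyBound, hmon.leadingCoeff]
      have hnd : (((T k).map Complex.ofReal).charpoly).natDegree = m := by
        rw [Matrix.charpoly_natDegree_eq_dim, Fintype.card_fin]
      rw [hnd]
      simp only [nnnorm_one, div_one]
      push_cast
      have : ((Finset.range m).sup fun j => ‖((T k).map Complex.ofReal).charpoly.coeff j‖₊ : ℝ≥0)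
          ≤ ∑ j ∈ Finset.range m, ‖((T k).map Complex.ofReal).charpoly.coeff j‖₊ := by
        apply Finset.sup_le
        intro j hj
        exact Finset.single_le_sum
          (f := fun j => ‖((T k).map Complex.ofReal).charpoly.coeff j‖₊) (fun _ _ => zero_le) hj
      have h2 := NNReal.coe_le_coe.mpr this
      push_cast at h2
      have hbk : b k = 1 + ∑ j ∈ Finset.range m, ‖((T k).map Complex.ofReal).charpoly.coeff j‖ :=
        rfl
      rw [hbk]
      linarith
    calc ‖r k i‖ ≤ (Polynomial.cauchyBound (((T k).map Complex.ofReal).charpoly) : ℝ) := by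
          exact_mod_cast hlt.le
      _ ≤ b k := hcb
  -- compactness
  set Cb' := max Cb 0 with hCb'
  have hmem : ∀ k, r k ∈ Metric.closedBall (0 : Fin m → ℂ) Cb' := by
    intro k
    rw [mem_closedBall_zero_iff]
    apply pi_norm_le_iff_of_nonneg (le_max_right Cb 0) |>.mpr
    intro i
    exact le_trans (hroot k i) (le_trans (hC0 k) (le_max_left _ _))
  obtain ⟨w, hwmem, φ, hφmono, hφtend⟩ :=
    (isCompact_closedBall (0 : Fin m → ℂ) Cb').tendsto_subseq hmem
  -- identify the limit polynomial
  have hident : (M₀.map Complex.ofReal).charpoly = ∏ i, (X - C (w i)) := by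
    apply Polynomial.funext
    intro z
    have e1 : Tendsto (fun j => ((T (φ j)).map Complex.ofReal).charpoly.eval z) atTop
        (𝓝 ((M₀.map Complex.ofReal).charpoly.eval z)) := by
      have hc : Continuous fun A : Matrix (Fin m) (Fin m) ℂ => A.charpoly.eval z := by
        have : (fun A : Matrix (Fin m) (Fin m) ℂ => A.charpoly.eval z)
            = fun A => (z • (1 : Matrix (Fin m) (Fin m) ℂ) - A).det := by
          funext A; exact eval_charpoly A z
        rw [this]; exact continuous_det_shift z
      exact ((hc.tendsto _).comp hTc).comp hφmono.tendsto_atTop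
    have e2 : Tendsto (fun j => ((T (φ j)).map Complex.ofReal).charpoly.eval z) atTop
        (𝓝 (∏ i, (z - w i))) := by
      have : (fun j => ((T (φ j)).map Complex.ofReal).charpoly.eval z)
          = fun j => ∏ i, (z - r (φ j) i) := by
        funext j
        rw [hr (φ j), Polynomial.eval_prod]
        simp
      rw [this]
      exact tendsto_finset_prod _ fun i _ =>
        tendsto_const_nhds.sub ((tendsto_pi_nhds.mp hφtend i))
    have := tendsto_nhds_unique e1 e2
    rw [this, Polynomial.eval_prod]
    simp
  -- conclude
  refine ⟨φ, ?_⟩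
  have hM₀ : specBound M₀ = Finset.univ.sup' hne (fun i => (w i).re) :=
    (isGreatest_specBound hne hident).1
  have hTk : ∀ j, specBound (T (φ j)) = Finset.univ.sup' hne (fun i => (r (φ j) i).re) :=
    fun j => (isGreatest_specBound hne (hr (φ j))).1
  rw [hM₀]
  have hv : Tendsto (fun j => fun i => (r (φ j) i).re) atTop
      (𝓝 (fun i => (w i).re)) := by
    rw [tendsto_pi_nhds]
    intro i
    exact (Complex.continuous_re.tendsto _).comp (tendsto_pi_nhds.mp hφtend i)
  have := ((continuous_sup' hne).tendsto _).comp hv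
  exact Tendsto.congr (fun j => (hTk j).symm) this

lemma specBound_continuous (hm : 0 < m) :
    Continuous fun M : Matrix (Fin m) (Fin m) ℝ => specBound M := by
  haveI : FirstCountableTopology (Matrix (Fin m) (Fin m) ℝ) :=
    inferInstanceAs (FirstCountableTopology (Fin m → Fin m → ℝ))
  rw [continuous_iff_seqContinuous]
  intro T M₀ hT
  apply tendsto_of_subseq_tendsto
  intro ns hns
  obtain ⟨φ, hφ⟩ := key_subseq hm (hT.comp hns)
  exact ⟨φ, hφ⟩

end SpecAux


open Filter Topology SpecAux

/-- Construction and properties of the lower control matrix `B̲^ε` (Step 1 of the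
proof of Theorem A). -/
theorem stmt_10 {N n : ℕ} (hn : 1 ≤ n) (Ω : Set (Fin N → ℝ)) (hΩo : IsOpen Ω)
    (hΩb : Bornology.IsBounded Ω) (hΩne : Ω.Nonempty)
    (B : (Fin N → ℝ) → Matrix (Fin n) (Fin n) ℝ)
    (hBcont : ContinuousOn B (closure Ω))
    (hBcoop : ∀ x ∈ closure Ω, ∀ i k, i ≠ k → 0 ≤ B x i k)
    (xt : Fin N → ℝ) (hxt : xt ∈ closure Ω) (hirr : MatIrreducible (B xt))
    (η : ℝ) (hη : IsGreatest ((fun x => specBound (B x)) '' closure Ω) η)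
    (ε : ℝ) (hε : 0 < ε)
    (Ωε : Set (Fin N → ℝ)) (hΩε : Ωε = {x ∈ closure Ω | η - ε ≤ specBound (B x)})
    (Bl : (Fin N → ℝ) → Matrix (Fin n) (Fin n) ℝ)
    (hBl₁ : ∀ x ∈ Ωε,
      Bl x = B x + (η - 2 * ε - specBound (B x)) • (1 : Matrix (Fin n) (Fin n) ℝ))
    (hBl₂ : ∀ x ∉ Ωε, Bl x = B x - ε • (1 : Matrix (Fin n) (Fin n) ℝ)) :
    ContinuousOn Bl (closure Ω) ∧
    (∀ x ∈ closure Ω, ∀ i k, i ≠ k → 0 ≤ Bl x i k) ∧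
    MatIrreducible (Bl xt) ∧
    (∀ x ∈ closure Ω, ∀ i k, Bl x i k ≤ B x i k) ∧
    (∀ x ∈ Ωε, specBound (Bl x) = η - 2 * ε) ∧
    (∀ x ∈ closure Ω \ Ωε, specBound (Bl x) < η - 2 * ε) ∧
    (∀ O : Set (Fin N → ℝ), IsOpen O → O.Nonempty → O ⊆ Ωε →
      ∫⁻ x in O, (ENNReal.ofReal ((η - 2 * ε) - specBound (Bl x)))⁻¹ = ⊤) := by
  have hn0 : 0 < n := hn
  have hmem : ∀ x, x ∈ Ωε ↔ x ∈ closure Ω ∧ η - ε ≤ specBound (B x) := by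
    intro x; rw [hΩε]; exact Set.mem_sep_iff
  have hgC : ContinuousOn (fun x => specBound (B x)) (closure Ω) :=
    (specBound_continuous hn0).comp_continuousOn hBcont
  -- representation with nonpositive diagonal shift
  have hrep : ∀ x ∈ closure Ω, ∃ d : ℝ, d ≤ 0 ∧
      Bl x = B x + d • (1 : Matrix (Fin n) (Fin n) ℝ) := by
    intro x hx
    by_cases hxe : x ∈ Ωε
    · refine ⟨η - 2 * ε - specBound (B x), ?_, hBl₁ x hxe⟩
      have := ((hmem x).mp hxe).2
      linarith
    · exact ⟨-ε, by linarith, by rw [hBl₂ x hxe, sub_eq_add_neg, ← neg_smul]⟩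
  have hent : ∀ (x : Fin N → ℝ) (d : ℝ) (i k : Fin n),
      (B x + d • (1 : Matrix (Fin n) (Fin n) ℝ)) i k
        = B x i k + (if i = k then d else 0) := by
    intro x d i k
    by_cases hik : i = k <;>
      simp [Matrix.add_apply, Matrix.smul_apply, Matrix.one_apply, hik]
  -- spectral bound on Ωε
  have heq : ∀ x ∈ Ωε, specBound (Bl x) = η - 2 * ε := by
    intro x hx
    rw [hBl₁ x hx, specBound_add_smul hn0]
    ring
  refine ⟨?_, ?_, ?_, ?_, heq, ?_, ?_⟩
  · -- continuity
    have hCc : ContinuousOn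
        (fun x => B x + (min (η - 2 * ε - specBound (B x)) (-ε)) •
          (1 : Matrix (Fin n) (Fin n) ℝ)) (closure Ω) :=
      hBcont.add (((continuousOn_const.sub hgC).inf continuousOn_const).smul continuousOn_const)
    refine hCc.congr ?_
    intro x hx
    by_cases hxe : x ∈ Ωε
    · have h2 := ((hmem x).mp hxe).2
      have hmin : (η - 2 * ε - specBound (B x)) ⊓ (-ε) = η - 2 * ε - specBound (B x) :=
        inf_eq_left.mpr (by linarith)
      show Bl x = B x + ((η - 2 * ε - specBound (B x)) ⊓ (-ε)) • (1 : Matrix (Fin n) (Fin n) ℝ)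
      rw [hBl₁ x hxe, hmin]
    · have h2 : specBound (B x) < η - ε := by
        by_contra hcon
        exact hxe ((hmem x).mpr ⟨hx, le_of_not_gt hcon⟩)
      have hmin : (η - 2 * ε - specBound (B x)) ⊓ (-ε) = -ε :=
        inf_eq_right.mpr (by linarith)
      show Bl x = B x + ((η - 2 * ε - specBound (B x)) ⊓ (-ε)) • (1 : Matrix (Fin n) (Fin n) ℝ)
      rw [hBl₂ x hxe, hmin, sub_eq_add_neg, ← neg_smul]
  · -- cooperativity
    intro x hx i k hik
    obtain ⟨d, hd, hBlx⟩ := hrep x hx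
    rw [hBlx, hent, if_neg hik, add_zero]
    exact hBcoop x hx i k hik
  · -- irreducibility
    intro I hI hIc
    obtain ⟨i, hiI, k, hkIc, hBik⟩ := hirr I hI hIc
    have hik : i ≠ k := fun h => hkIc (h ▸ hiI)
    obtain ⟨d, hd, hBlx⟩ := hrep xt hxt
    refine ⟨i, hiI, k, hkIc, ?_⟩
    rw [hBlx, hent, if_neg hik, add_zero]
    exact hBik
  · -- entrywise ≤
    intro x hx i k
    obtain ⟨d, hd, hBlx⟩ := hrep x hx
    rw [hBlx, hent]
    by_cases hik : i = k <;> simp [hik] <;> linarith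
  · -- strict inequality off Ωε
    rintro x ⟨hxcl, hxne⟩
    have h2 : specBound (B x) < η - ε := by
      by_contra hcon
      exact hxne ((hmem x).mpr ⟨hxcl, le_of_not_gt hcon⟩)
    rw [hBl₂ x hxne, sub_eq_add_neg, ← neg_smul, specBound_add_smul hn0]
    linarith
  · -- non-integrability
    intro O hO hOne hOsub
    have hval : ∀ x ∈ O, (ENNReal.ofReal ((η - 2 * ε) - specBound (Bl x)))⁻¹ = ⊤ := by
      intro x hx
      rw [heq x (hOsub hx)]
      simp
    have hle : (⊤ : ENNReal) * volume O
        ≤ ∫⁻ x in O, (ENNReal.ofReal ((η - 2 * ε) - specBound (Bl x)))⁻¹ := by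
      calc (⊤ : ENNReal) * volume O = ∫⁻ _ in O, (⊤ : ENNReal) :=
            (setLIntegral_const O ⊤).symm
        _ ≤ _ := lintegral_mono_ae (((ae_restrict_mem hO.measurableSet)).mono
            fun x hx => (hval x hx).ge)
    have hO0 : volume O ≠ 0 := (hO.measure_pos volume hOne).ne'
    rw [ENNReal.top_mul hO0] at hle
    exact top_le_iff.mp hle
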